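/- Let φ : R_A → R_B be a graded ring isomorphism that is k-stable, let ℓ := ht(φ(x_{k+1})), assume ℓ > k+1, and assume p := b_{ℓ,ℓ−1} ≠ 0. Then β̄_ℓ = p(y_{ℓ−1} − β̄_{ℓ−1}/2) in H²(B) ⊗ ℚ, where β̄_m := Σ_{j=k+1}^{m−1} b_{m j} y_j for m = ℓ−1, ℓ; equivalently, b_{ℓ j} = −(p/2) b_{ℓ−1, j} for all k+1 ≤ j ≤ ℓ−2. -/

import Mathlib

open MvPolynomial

namespace Bott

/-- A square integer matrix indexed by `Fin n` (rows, columns).  We think of it as the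
matrix `A = (a_{ij})` defining a Bott tower; strict lower triangularity is the
predicate `SLT` below. -/
abbrev Mat (n : ℕ) := Fin n → Fin n → ℤ

/-- `a` is strictly lower triangular: `a i j = 0` unless `j < i`. -/
def SLT {n : ℕ} (a : Mat n) : Prop := ∀ i j : Fin n, a i j ≠ 0 → (j : ℕ) < (i : ℕ)

section Defs

variable (n : ℕ)

/-- The linear form `α_i = ∑_{j<i} a_{ij} x_j` (the terms with `j ≥ i` vanish for a
strictly lower triangular matrix). -/
noncomputable def alpha (a : Mat n) (i : Fin n) : MvPolynomial (Fin n) ℤ :=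
  ∑ j, C (a i j) * X j

/-- The ideal `(x_i² − α_i x_i : 1 ≤ i ≤ n)`. -/
noncomputable def bottIdeal (a : Mat n) : Ideal (MvPolynomial (Fin n) ℤ) :=
  Ideal.span (Set.range fun i : Fin n => X i ^ 2 - alpha n a i * X i)

/-- The Bott ring `R_A = ℤ[x_1,…,x_n]/(x_i² − α_i x_i)`. -/
abbrev BRing (a : Mat n) := MvPolynomial (Fin n) ℤ ⧸ bottIdeal n a

/-- Quotient projection onto the Bott ring. -/
noncomputable def bmk (a : Mat n) : MvPolynomial (Fin n) ℤ →+* BRing n a :=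
  Ideal.Quotient.mk _

/-- The class `x_i` in the Bott ring (0-based: `bx a i` is the paper's `x_{i+1}`). -/
noncomputable def bx (a : Mat n) (i : Fin n) : BRing n a := bmk n a (X i)

/-- The class of `α_i` in the Bott ring. -/
noncomputable def bal (a : Mat n) (i : Fin n) : BRing n a := bmk n a (alpha n a i)

/-- `F_k(A)`: the span of the first `k` degree-2 generators (paper's `x_1, …, x_k`,
0-based indices `< k`). -/
noncomputable def F (a : Mat n) (k : ℕ) : Submodule ℤ (BRing n a) :=
  Submodule.span ℤ (bx n a '' {i : Fin n | (i : ℕ) < k})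

/-- `H²(A)`: the span of all the degree-2 generators. -/
noncomputable def H2 (a : Mat n) : Submodule ℤ (BRing n a) :=
  Submodule.span ℤ (Set.range (bx n a))

/-- `ht(η) = min {k | η ∈ F_k(A)}`. -/
noncomputable def ht (a : Mat n) (η : BRing n a) : ℕ := sInf {k | η ∈ F n a k}

/-- A ring isomorphism between Bott rings is graded iff it preserves the degree-2
components in both directions (both rings are generated in degree 2, so this is
equivalent to preserving the whole grading). -/
def IsGraded (a b : Mat n) (φ : BRing n a ≃+* BRing n b) : Prop :=
  (∀ z ∈ H2 n a, φ z ∈ H2 n b) ∧ (∀ z ∈ H2 n b, φ.symm z ∈ H2 n a)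

/-- `φ` is `k`-stable: `φ(F_k(A)) ⊆ F_k(B)`. -/
def IsStable (a b : Mat n) (k : ℕ) (φ : BRing n a ≃+* BRing n b) : Prop :=
  ∀ z ∈ F n a k, φ z ∈ F n b k

/-! ### Rationalizations -/

/-- The linear form `α_i` with rational coefficients. -/
noncomputable def alphaQ (a : Mat n) (i : Fin n) : MvPolynomial (Fin n) ℚ :=
  ∑ j, C ((a i j : ℚ)) * X j

noncomputable def bottIdealQ (a : Mat n) : Ideal (MvPolynomial (Fin n) ℚ) :=
  Ideal.span (Set.range fun i : Fin n => X i ^ 2 - alphaQ n a i * X i)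

/-- The rationalized Bott ring `R_A ⊗ ℚ`. -/
abbrev BRingQ (a : Mat n) := MvPolynomial (Fin n) ℚ ⧸ bottIdealQ n a

noncomputable def bmkQ (a : Mat n) : MvPolynomial (Fin n) ℚ →+* BRingQ n a :=
  Ideal.Quotient.mk _

noncomputable def bxQ (a : Mat n) (i : Fin n) : BRingQ n a := bmkQ n a (X i)

noncomputable def balQ (a : Mat n) (i : Fin n) : BRingQ n a := bmkQ n a (alphaQ n a i)

/-- `F_k(A) ⊗ ℚ` inside `R_A ⊗ ℚ`. -/
noncomputable def FQ (a : Mat n) (k : ℕ) : Submodule ℚ (BRingQ n a) :=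
  Submodule.span ℚ (bxQ n a '' {i : Fin n | (i : ℕ) < k})

/-- The canonical map `R_A → R_A ⊗ ℚ`. -/
noncomputable def toQ (a : Mat n) : BRing n a →+* BRingQ n a :=
  Ideal.Quotient.lift (bottIdeal n a)
    ((bmkQ n a).comp (MvPolynomial.map (Int.castRingHom ℚ)))
    (by
      intro p hp
      have hmap : ∀ i : Fin n,
          MvPolynomial.map (Int.castRingHom ℚ) (alpha n a i) = alphaQ n a i := by
        intro i
        simp [alpha, alphaQ, map_sum]
      have h : bottIdeal n a ≤
          Ideal.comap (MvPolynomial.map (Int.castRingHom ℚ)) (bottIdealQ n a) := by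
        rw [bottIdeal, Ideal.span_le]
        rintro _ ⟨i, rfl⟩
        simp only [SetLike.mem_coe, Ideal.mem_comap, map_sub, map_mul, map_pow,
          MvPolynomial.map_X, hmap]
        exact Ideal.subset_span ⟨i, rfl⟩
      rw [RingHom.comp_apply]
      exact Ideal.Quotient.eq_zero_iff_mem.mpr (h hp))

/-- The truncated linear form `β̄_ℓ` (rational version): for a 0-based row index `li`,
this is `∑_{k ≤ j < li} b_{li,j} y_j`, i.e. the paper's `β_ℓ` with its terms in
`F_k(B)` removed. -/
noncomputable def bbarQ (b : Mat n) (k : ℕ) (li : Fin n) : BRingQ n b :=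
  ∑ j ∈ Finset.univ.filter (fun j : Fin n => k ≤ (j : ℕ) ∧ j < li),
    (b li j : ℚ) • bxQ n b j

/-- Half of the truncated linear form `β̄_ℓ / 2` (meaningful when all relevant entries
are even), as an element of the integral Bott ring. -/
noncomputable def bbarHalf (b : Mat n) (k : ℕ) (li : Fin n) : BRing n b :=
  ∑ j ∈ Finset.univ.filter (fun j : Fin n => k ≤ (j : ℕ) ∧ j < li),
    (b li j / 2) • bx n b j

/-! ### Switching and twisting -/

/-- The matrix obtained from `b` by exchanging the rows and columns `p` and `q`. -/
def swapMat (b : Mat n) (p q : Fin n) : Mat n :=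
  fun i j => b (Equiv.swap p q i) (Equiv.swap p q j)

/-- `g : R_C → R_{C'}` is a switching isomorphism: for some `j` (0-based `J`) with
`c_{j+1,j} = 0`, `C'` is obtained from `C` by exchanging the `j`-th and `(j+1)`-st rows
and columns, and `g` swaps the `j`-th and `(j+1)`-st generators and fixes the others. -/
def IsSwitch (c c' : Mat n) (g : BRing n c ≃+* BRing n c') : Prop :=
  IsGraded n c c' g ∧
  ∃ (J : ℕ) (hJ : J + 1 < n),
    c ⟨J + 1, hJ⟩ ⟨J, by omega⟩ = 0 ∧
    c' = swapMat n c ⟨J, by omega⟩ ⟨J + 1, hJ⟩ ∧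
    ∀ i, g (bx n c i) = bx n c' (Equiv.swap (⟨J, by omega⟩ : Fin n) ⟨J + 1, hJ⟩ i)

/-- `g : R_C → R_{C'}` is a twisting isomorphism: for some `j` (0-based `J`) and
`v ∈ F_{j−1}(C)` with `v(γ_j − v) = 0`, the rows of `C'` before `j` agree with those of
`C`, `γ'_j = γ_j − 2v`, and `g` is a graded isomorphism fixing the first `j−1`
generators. -/
def IsTwist (c c' : Mat n) (g : BRing n c ≃+* BRing n c') : Prop :=
  IsGraded n c c' g ∧
  ∃ (J : ℕ) (hJ : J < n) (v : BRing n c),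
    v ∈ F n c J ∧ v * (bal n c ⟨J, hJ⟩ - v) = 0 ∧
    (∀ i : Fin n, (i : ℕ) < J → ∀ m, c' i m = c i m) ∧
    ((∑ m, c' ⟨J, hJ⟩ m • bx n c m) = bal n c ⟨J, hJ⟩ - 2 • v) ∧
    (∀ i : Fin n, (i : ℕ) < J → g (bx n c i) = bx n c' i)

/-- `IsMoveComp n c c' g` : `g : R_C → R_{C'}` is a finite (possibly empty) composition
of switching and twisting isomorphisms. -/
inductive IsMoveComp : ∀ c c' : Mat n, (BRing n c ≃+* BRing n c') → Prop
  | refl (c : Mat n) : IsMoveComp c c (RingEquiv.refl _)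
  | switch {c c' c'' : Mat n} {g : BRing n c ≃+* BRing n c'}
      {g' : BRing n c' ≃+* BRing n c''} :
      IsMoveComp c c' g → IsSwitch n c' c'' g' → IsMoveComp c c'' (g.trans g')
  | twist {c c' c'' : Mat n} {g : BRing n c ≃+* BRing n c'}
      {g' : BRing n c' ≃+* BRing n c''} :
      IsMoveComp c c' g → IsTwist n c' c'' g' → IsMoveComp c c'' (g.trans g')

end Defs

/-! ### Block matrices for ℚ-trivial Bott manifolds -/

/-- Starting (0-based) index of the `s`-th block for the partition `lam`. -/
def blockStart (t : ℕ) (lam : Fin t → ℕ) (s : Fin t) : ℕ :=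
  ∑ s' ∈ Finset.univ.filter (fun s' : Fin t => s' < s), lam s'

/-- The block-diagonal matrix with diagonal blocks `H_{λ_1}, …, H_{λ_t}`, where `H_j`
is the `j × j` strictly lower triangular matrix whose first column below the diagonal
consists of `1`s and whose other entries vanish. -/
def blockMat (n t : ℕ) (lam : Fin t → ℕ) : Mat n := fun i j =>
  if ∃ s : Fin t, (j : ℕ) = blockStart t lam s ∧ blockStart t lam s < (i : ℕ) ∧
      (i : ℕ) < blockStart t lam s + lam s then 1 else 0

/-- `H²(ℋ_{λ_s})`: the subgroup of the degree-2 component spanned by the generators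
belonging to the `s`-th block. -/
noncomputable def blockH2 (n t : ℕ) (lam : Fin t → ℕ) (s : Fin t) :
    Submodule ℤ (BRing n (blockMat n t lam)) :=
  Submodule.span ℤ (bx n (blockMat n t lam) ''
    {i : Fin n | blockStart t lam s ≤ (i : ℕ) ∧ (i : ℕ) < blockStart t lam s + lam s})

end Bott

/-!
Write `z = φ(x_{k+1}) = ∑ c_j y_j`; then `c_j = 0` for `j > ℓ` and `c_ℓ ≠ 0` by the definition of
`ℓ`. Applying `φ` to `x_{k+1}² = α_{k+1} x_{k+1}` gives `z² = w z` with `w = φ(α_{k+1}) ∈ F_k(B)`.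
For `k < i < j`, the coefficient of `y_i y_j` in `z² − w z`, read off through the ring map to
`ℚ[ε₁, ε₂]/(ε₁², ε₂²)` sending `y_i ↦ ε₁`, `y_j ↦ ε₂ + (b_{ji}/2) ε₁` and the other generators
to `0`, is `2 c_i c_j + c_j² b_{ji}`, so it vanishes. The pair `(ℓ−1, ℓ)` gives
`2 c_{ℓ−1} = −p c_ℓ ≠ 0`, and comparing the pairs `(j, ℓ)` and `(j, ℓ−1)` gives
`2 b_{ℓj} = −p b_{ℓ−1,j}`.
-/

namespace Bott

open MvPolynomial TrivSqZeroExt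

section Generators

variable {n : ℕ} {a : Mat n}

theorem bx_mul_self (i : Fin n) : bx n a i * bx n a i = bal n a i * bx n a i := by
  have h : bmk n a (X i ^ 2 - alpha n a i * X i) = 0 :=
    Ideal.Quotient.eq_zero_iff_mem.mpr (Ideal.subset_span ⟨i, rfl⟩)
  rwa [map_sub, map_mul, map_pow, sub_eq_zero, sq] at h

theorem bal_eq_sum (i : Fin n) : bal n a i = ∑ j, a i j • bx n a j := by
  simp [bal, alpha, bx, zsmul_eq_mul]

theorem sum_zsmul_bx_mem_F {m : ℕ} (c : Fin n → ℤ) (hc : ∀ j : Fin n, m ≤ j → c j = 0) :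
    ∑ j, c j • bx n a j ∈ F n a m := by
  refine Submodule.sum_mem _ fun j _ => ?_
  rcases lt_or_ge (j : ℕ) m with h | h
  · exact Submodule.smul_mem _ _ (Submodule.subset_span ⟨j, h, rfl⟩)
  · simp [hc j h]

theorem exists_eq_sum_of_mem_F {m : ℕ} {z : BRing n a} (hz : z ∈ F n a m) :
    ∃ c : Fin n → ℤ, (∀ j : Fin n, m ≤ j → c j = 0) ∧ z = ∑ j, c j • bx n a j := by
  rw [F, Finsupp.mem_span_image_iff_linearCombination] at hz
  obtain ⟨c, hsupp, rfl⟩ := hz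
  refine ⟨c, fun j hj => ?_, ?_⟩
  · by_contra hne
    exact absurd (hsupp (Finsupp.mem_support_iff.mpr hne)) (by simpa using hj)
  · exact Finsupp.sum_fintype _ _ fun _ => zero_smul _ _

theorem bal_mem_F (ha : SLT a) (i : Fin n) : bal n a i ∈ F n a i := by
  rw [bal_eq_sum]
  exact sum_zsmul_bx_mem_F _ fun j hj => by_contra fun hne => (ha i j hne).not_ge hj

theorem mem_F_ht {z : BRing n a} (hz : ht n a z ≠ 0) : z ∈ F n a (ht n a z) :=
  Nat.sInf_mem (Set.nonempty_iff_ne_empty.mpr fun h => hz (Nat.sInf_eq_zero.mpr (Or.inr h)))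

theorem notMem_F_of_lt_ht {z : BRing n a} {m : ℕ} (hm : m < ht n a z) : z ∉ F n a m :=
  Nat.notMem_of_lt_sInf hm

theorem toQ_bx (i : Fin n) : toQ n a (bx n a i) = bxQ n a i := by
  simp [toQ, bx, bxQ, bmk, bmkQ]

end Generators

noncomputable section DualPair

-- `ℚ[ε₁, ε₂]/(ε₁², ε₂²)`, with `ε₁ = inl ε` and `ε₂ = ε`.
local notation "𝔻" => DualNumber (DualNumber ℚ)

def eps₁ : 𝔻 := inl DualNumber.eps

def eps₂ : 𝔻 := DualNumber.eps

theorem eps₁_mul_self : eps₁ * eps₁ = 0 := by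
  rw [eps₁, inl_mul_inl, DualNumber.eps_mul_eps, inl_zero]

theorem eps₂_mul_self : eps₂ * eps₂ = 0 := DualNumber.eps_mul_eps

theorem snd_snd_smul_eps₁_mul_eps₂ (x : ℚ) : (x • (eps₁ * eps₂)).snd.snd = x := by
  simp [eps₁, eps₂, DualNumber.eps, -DualNumber.inr_eq_smul_eps]

theorem smul_add_smul_mul_smul_add_smul (x y x' y' : ℚ) :
    (x • eps₁ + y • eps₂) * (x' • eps₁ + y' • eps₂) = (x * y' + y * x') • (eps₁ * eps₂) := by
  have h₂₁ : eps₂ * eps₁ = eps₁ * eps₂ := mul_comm eps₂ eps₁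
  simp only [add_mul, mul_add, smul_mul_smul_comm, eps₁_mul_self, eps₂_mul_self, h₂₁,
    smul_zero, zero_add, add_zero, add_smul]
  exact add_comm _ _

variable {n : ℕ} {b : Mat n} {i j : Fin n}

-- The shift by `(b_{ji}/2) ε₁` in the image of `y_j` is what makes `y_j² = β_j y_j` hold.
def pairPoint (b : Mat n) (i j : Fin n) (m : Fin n) : 𝔻 :=
  if m = i then eps₁ else if m = j then ((b j i : ℚ) / 2) • eps₁ + eps₂ else 0

theorem sum_smul_pairPoint (hij : i ≠ j) (c : Fin n → ℚ) :
    ∑ m, c m • pairPoint b i j m = (c i + c j * ((b j i : ℚ) / 2)) • eps₁ + c j • eps₂ := by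
  rw [Fintype.sum_eq_add i j hij fun m hm => by simp [pairPoint, hm.1, hm.2]]
  simp only [pairPoint, if_neg hij.symm, ↓reduceIte]
  module

theorem aeval_pairPoint_alphaQ (hij : i ≠ j) (m : Fin n) :
    aeval (pairPoint b i j) (alphaQ n b m) =
      ((b m i : ℚ) + b m j * ((b j i : ℚ) / 2)) • eps₁ + (b m j : ℚ) • eps₂ := by
  rw [alphaQ, map_sum, ← sum_smul_pairPoint hij fun r => (b m r : ℚ)]
  simp only [map_mul, aeval_C, aeval_X]
  exact Finset.sum_congr rfl fun r _ => (Algebra.smul_def _ _).symm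

theorem aeval_pairPoint_bottRel (hb : SLT b) (hij : (i : ℕ) < j) (m : Fin n) :
    aeval (pairPoint b i j) (X m ^ 2 - alphaQ n b m * X m) = 0 := by
  have hne : i ≠ j := Fin.ne_of_lt hij
  have hdiag : b m m = 0 := by_contra fun h => (hb m m h).false
  rw [map_sub, map_mul, map_pow, aeval_X, aeval_pairPoint_alphaQ hne, sq]
  by_cases hmi : m = i
  · subst hmi
    have hmj : b m j = 0 := by_contra fun h => (hb m j h).not_gt hij
    have hpt : pairPoint b m j m = (1 : ℚ) • eps₁ + (0 : ℚ) • eps₂ := by simp [pairPoint]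
    rw [hpt, smul_add_smul_mul_smul_add_smul, hdiag, hmj, smul_add_smul_mul_smul_add_smul]
    simp
  by_cases hmj : m = j
  · subst hmj
    have hpt : pairPoint b i m m = ((b m i : ℚ) / 2) • eps₁ + (1 : ℚ) • eps₂ := by
      simp [pairPoint, hmi]
    rw [hpt, smul_add_smul_mul_smul_add_smul, hdiag, smul_add_smul_mul_smul_add_smul, sub_eq_zero]
    congr 1
    push_cast
    ring
  · simp [pairPoint, hmi, hmj]

def pairHom (hb : SLT b) (hij : (i : ℕ) < j) : BRingQ n b →ₐ[ℚ] 𝔻 :=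
  Ideal.Quotient.liftₐ _ (aeval (pairPoint b i j)) fun _ hp => RingHom.mem_ker.mp <|
    (Ideal.span_le (I := RingHom.ker (aeval (pairPoint b i j)))).mpr
      (by rintro _ ⟨m, rfl⟩; exact aeval_pairPoint_bottRel hb hij m) hp

theorem pairHom_bxQ (hb : SLT b) (hij : (i : ℕ) < j) (m : Fin n) :
    pairHom hb hij (bxQ n b m) = pairPoint b i j m :=
  (Ideal.Quotient.lift_mk _ _ _).trans (aeval_X _ _)

end DualPair

section Coefficients

variable {n : ℕ} {b : Mat n}

theorem coeff_mul_self_eq_zero (hb : SLT b) {i j : Fin n} (hij : (i : ℕ) < j)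
    {c d : Fin n → ℚ} (hd : ∀ m : Fin n, (i : ℕ) ≤ m → d m = 0)
    (h : (∑ m, c m • bxQ n b m) * (∑ m, c m • bxQ n b m) =
      (∑ m, d m • bxQ n b m) * (∑ m, c m • bxQ n b m)) :
    2 * c i * c j + c j ^ 2 * b j i = 0 := by
  have hne : i ≠ j := Fin.ne_of_lt hij
  have hmap : ∀ e : Fin n → ℚ, pairHom hb hij (∑ m, e m • bxQ n b m) =
      (e i + e j * ((b j i : ℚ) / 2)) • eps₁ + e j • eps₂ := fun e => by
    simp only [map_sum, map_smul, pairHom_bxQ, sum_smul_pairPoint hne]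
  have h' := congrArg (fun z => (pairHom hb hij z).snd.snd) h
  simp only [map_mul, hmap, hd i le_rfl, hd j hij.le, smul_add_smul_mul_smul_add_smul,
    snd_snd_smul_eps₁_mul_eps₂] at h'
  linear_combination h'

theorem coeff_mul_self_eq_zero_of_mem_F (hb : SLT b) {i j : Fin n} (hij : (i : ℕ) < j)
    {m : ℕ} (hmi : m ≤ i) {z w : BRing n b} {c : Fin n → ℤ} (hz : z = ∑ r, c r • bx n b r)
    (hw : w ∈ F n b m) (h : z * z = w * z) :
    2 * c i * c j + c j ^ 2 * b j i = 0 := by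
  obtain ⟨d, hd, rfl⟩ := exists_eq_sum_of_mem_F hw
  have hQ := congrArg (toQ n b) (hz ▸ h)
  simp only [map_mul, map_sum, map_zsmul, toQ_bx, ← Int.cast_smul_eq_zsmul ℚ] at hQ
  exact_mod_cast coeff_mul_self_eq_zero hb hij
    (fun r hr => by rw [hd r (hmi.trans hr), Int.cast_zero]) hQ

theorem two_mul_eq_neg_mul_of_coeff_relations {R : Type*} [CommRing R] [NoZeroDivisors R]
    {c₁ c₂ c p b₁ b₂ : R} (hc₁ : c₁ ≠ 0) (hp : p ≠ 0) (h₂₁ : 2 * c₂ * c₁ + c₁ ^ 2 * p = 0)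
    (h₁ : 2 * c * c₁ + c₁ ^ 2 * b₁ = 0) (h₂ : 2 * c * c₂ + c₂ ^ 2 * b₂ = 0) :
    2 * b₁ = -(p * b₂) := by
  have e₂₁ : 2 * c₂ + c₁ * p = 0 :=
    (mul_eq_zero.mp (by linear_combination h₂₁ : c₁ * _ = 0)).resolve_left hc₁
  have hc₂ : c₂ ≠ 0 := by
    rintro rfl
    exact mul_ne_zero hc₁ hp (by linear_combination e₂₁)
  have e₁ : 2 * c + c₁ * b₁ = 0 :=
    (mul_eq_zero.mp (by linear_combination h₁ : c₁ * _ = 0)).resolve_left hc₁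
  have e₂ : 2 * c + c₂ * b₂ = 0 :=
    (mul_eq_zero.mp (by linear_combination h₂ : c₂ * _ = 0)).resolve_left hc₂
  exact mul_left_cancel₀ hc₁ (by linear_combination 2 * e₁ - 2 * e₂ + b₂ * e₂₁)

theorem bbarQ_eq_smul_sub {k : ℕ} {i i' : Fin n} (hi : (i : ℕ) = i' + 1) (hki : k ≤ i')
    (h : ∀ j : Fin n, k ≤ j → (j : ℕ) < i' → 2 * b i j = -(b i i' * b i' j)) :
    bbarQ n b k i = (b i i' : ℚ) • (bxQ n b i' - (2 : ℚ)⁻¹ • bbarQ n b k i') := by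
  have hsplit : Finset.univ.filter (fun j : Fin n => k ≤ (j : ℕ) ∧ j < i) =
      insert i' (Finset.univ.filter fun j : Fin n => k ≤ (j : ℕ) ∧ j < i') := by
    ext j
    simp only [Finset.mem_filter, Finset.mem_univ, true_and, Finset.mem_insert, Fin.lt_def,
      Fin.ext_iff]
    omega
  have hi' : i' ∉ Finset.univ.filter fun j : Fin n => k ≤ (j : ℕ) ∧ j < i' := by simp
  rw [bbarQ, bbarQ, hsplit, Finset.sum_insert hi', smul_sub, Finset.smul_sum, Finset.smul_sum,
    sub_eq_add_neg, ← Finset.sum_neg_distrib]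
  refine congrArg _ (Finset.sum_congr rfl fun j hj => ?_)
  simp only [Finset.mem_filter, Finset.mem_univ, true_and] at hj
  have hbj : (2 * b i j : ℚ) = -(b i i' * b i' j) := by exact_mod_cast h j hj.1 hj.2
  rw [smul_smul, smul_smul, ← neg_smul]
  congr 1
  linear_combination hbj / 2

end Coefficients

/-- Let `φ : R_A → R_B` be a `k`-stable graded ring isomorphism,
`ℓ := ht(φ(x_{k+1})) > k + 1`, and assume `p := b_{ℓ,ℓ−1} ≠ 0`.  Then
`β̄_ℓ = p(y_{ℓ−1} − β̄_{ℓ−1}/2)` in `H²(B) ⊗ ℚ`, where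
`β̄_m = ∑_{j=k+1}^{m−1} b_{mj} y_j`. -/
theorem stmt_11 (n k : ℕ) (hk : k < n) (a b : Mat n) (ha : SLT a) (hb : SLT b)
    (φ : BRing n a ≃+* BRing n b) (hst : IsStable n a b k φ)
    (l : ℕ) (hl : l = ht n b (φ (bx n a ⟨k, hk⟩))) (hlk : k + 1 < l) (hln : l ≤ n)
    (hp : b ⟨l - 1, by omega⟩ ⟨l - 2, by omega⟩ ≠ 0) :
    bbarQ n b k ⟨l - 1, by omega⟩ =
      (b ⟨l - 1, by omega⟩ ⟨l - 2, by omega⟩ : ℚ) •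
        (bxQ n b ⟨l - 2, by omega⟩ - (2 : ℚ)⁻¹ • bbarQ n b k ⟨l - 2, by omega⟩) := by
  have hzl : φ (bx n a ⟨k, hk⟩) ∈ F n b l := hl ▸ mem_F_ht (by omega)
  have hzl' : φ (bx n a ⟨k, hk⟩) ∉ F n b (l - 1) := notMem_F_of_lt_ht (by omega)
  obtain ⟨c, hc, hzc⟩ := exists_eq_sum_of_mem_F hzl
  have hcl : c ⟨l - 1, by omega⟩ ≠ 0 := fun hc₀ =>
    hzl' <| hzc ▸ sum_zsmul_bx_mem_F c fun j hj => by
      rcases hj.eq_or_lt with hj | hj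
      · exact (congrArg c (Fin.ext hj.symm)).trans hc₀
      · exact hc j (by omega)
  have hrel : φ (bx n a ⟨k, hk⟩) * φ (bx n a ⟨k, hk⟩) =
      φ (bal n a ⟨k, hk⟩) * φ (bx n a ⟨k, hk⟩) := by
    rw [← map_mul, ← map_mul, bx_mul_self]
  have hcoeff (i j : Fin n) (hij : (i : ℕ) < j) (hki : k ≤ i) :
      2 * c i * c j + c j ^ 2 * b j i = 0 :=
    coeff_mul_self_eq_zero_of_mem_F hb hij hki hzc (hst _ (bal_mem_F ha ⟨k, hk⟩)) hrel
  refine bbarQ_eq_smul_sub (by dsimp only; omega) (by dsimp only; omega) fun j hkj hjl => ?_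
  exact two_mul_eq_neg_mul_of_coeff_relations hcl hp
    (hcoeff ⟨l - 2, by omega⟩ ⟨l - 1, by omega⟩ (by dsimp only; omega) (by dsimp only; omega))
    (hcoeff j ⟨l - 1, by omega⟩ (by dsimp only at hjl ⊢; omega) hkj)
    (hcoeff j ⟨l - 2, by omega⟩ hjl hkj)

end Bott
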